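/- arXiv:2010.15580 — 6 statements merged into one kernel-verified Lean document; each statement's English description precedes it below -/
import Mathlib

section
/- For every x ≥ 8, θ(x) < (x - 4)·log 4, where θ(x) = ∑_{p ≤ x} log p is the Chebyshev theta function with the sum over primes p ≤ x. -/
/-!
The primes in `(m + 1, 2m + 1]` all divide `C(2m + 1, m) ≤ 4 ^ m`, so `(2m + 1)# ≤ (m + 1)# · 4 ^ m`,
while `(2m + 2)# = (2m + 1)#`. Hence any bound `n# · C < 4 ^ n` propagates by strong induction
once it holds on a window `n₀ ≤ n < 2n₀ - 1`; for `C = 4 ^ 4` a direct computation on `8 ≤ n ≤ 14`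
starts it. Taking logarithms gives `θ(x) = log ⌊x⌋# < (⌊x⌋ - 4) log 4 ≤ (x - 4) log 4`.
-/

open Finset Nat

theorem primorial_two_mul_add_one_le (m : ℕ) : primorial (2 * m + 1) ≤ primorial (m + 1) * 4 ^ m :=
  calc primorial (2 * m + 1) = primorial (m + 1 + m) := by ring_nf
    _ ≤ primorial (m + 1) * choose (m + 1 + m) (m + 1) := primorial_add_le m.le_succ
    _ = primorial (m + 1) * choose (2 * m + 1) m := by
      rw [choose_symm_add, two_mul, add_right_comm]
    _ ≤ primorial (m + 1) * 4 ^ m := Nat.mul_le_mul_left _ (choose_middle_le_pow m)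

theorem four_pow_four_mul_primorial_lt_four_pow {n : ℕ} (hn : 8 ≤ n) :
    4 ^ 4 * primorial n < 4 ^ n := by
  induction n using Nat.strong_induction_on with | h n ih =>
  rcases lt_or_ge n 15 with hn15 | hn15
  · interval_cases n <;> decide
  rcases n.even_or_odd' with ⟨m, rfl | rfl⟩
  · have hodd : Odd (2 * m - 1) := ⟨m - 1, by omega⟩
    calc 4 ^ 4 * primorial (2 * m) = 4 ^ 4 * primorial (2 * m - 1) := by
          rw [← primorial_succ (by omega) hodd, Nat.sub_add_cancel (by omega)]
      _ < 4 ^ (2 * m - 1) := ih _ (by omega) (by omega)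
      _ ≤ 4 ^ (2 * m) := Nat.pow_le_pow_right (by norm_num) (by omega)
  · calc 4 ^ 4 * primorial (2 * m + 1) ≤ 4 ^ 4 * primorial (m + 1) * 4 ^ m := by
          rw [mul_assoc]; exact Nat.mul_le_mul_left _ (primorial_two_mul_add_one_le m)
      _ < 4 ^ (m + 1) * 4 ^ m :=
          Nat.mul_lt_mul_of_pos_right (ih _ (by omega) (by omega)) (by positivity)
      _ = 4 ^ (2 * m + 1) := by ring

theorem sum_log_primes_le_eq_log_primorial (n : ℕ) :
    ∑ p ∈ (range (n + 1)).filter Nat.Prime, Real.log p = Real.log (primorial n) := by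
  rw [primorial, Nat.cast_prod, Real.log_prod fun p hp ↦ by
    exact_mod_cast (mem_filter.1 hp).2.ne_zero]

theorem theta_lt (x : ℝ) (hx : 8 ≤ x) :
    ∑ p ∈ (Finset.range (⌊x⌋₊ + 1)).filter Nat.Prime, Real.log p
      < (x - 4) * Real.log 4 := by
  set n := ⌊x⌋₊
  have hn : 8 ≤ n := Nat.le_floor (by exact_mod_cast hx)
  have hnx : (n : ℝ) ≤ x := Nat.floor_le (by linarith)
  have hbound : (4 : ℝ) ^ 4 * primorial n < 4 ^ n := by
    exact_mod_cast four_pow_four_mul_primorial_lt_four_pow hn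
  have hprimorial : (0 : ℝ) < primorial n := by exact_mod_cast primorial_pos n
  have hlog := Real.log_lt_log (by positivity) hbound
  rw [Real.log_mul (by positivity) hprimorial.ne', Real.log_pow,
    Real.log_pow] at hlog
  rw [sum_log_primes_le_eq_log_primorial]
  calc Real.log (primorial n) < ((n : ℝ) - 4) * Real.log 4 := by push_cast at hlog; linarith
    _ ≤ (x - 4) * Real.log 4 := by gcongr
end

section
/- For every real x ≥ 2, ∑_{p ≤ x} (log p)/p ≤ log x + log 4, where the sum runs over primes p ≤ x. -/
/-!
Legendre's formula gives `⌊n/p⌋ ≤ v_p(n!)`, hence `∑_{p ≤ n} ⌊n/p⌋ log p ≤ log n! ≤ n log n`.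
Replacing `n/p` by `⌊n/p⌋ + 1` costs at most `θ(n) = ∑_{p ≤ n} log p ≤ n log 4` (Chebyshev), so
`n ∑_{p ≤ n} log p / p ≤ n log n + n log 4`; apply this to `n = ⌊x⌋`.
-/

open Finset Real
open scoped Nat

namespace Nat

theorem cast_div_lt_div_add_one {K : Type*} [Semifield K] [LinearOrder K]
    [IsStrictOrderedRing K] [FloorSemiring K] (m n : ℕ) : (m : K) / n < (m / n : ℕ) + 1 := by
  rw [← floor_div_eq_div (K := K)]
  exact lt_floor_add_one _

lemma div_le_factorization_factorial {p : ℕ} (hp : p.Prime) (n : ℕ) :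
    n / p ≤ (n !).factorization p := by
  rw [factorization_factorial hp (b := Nat.log p n + 2) (by omega)]
  simpa using single_le_sum (f := fun i => n / p ^ i) (fun _ _ => Nat.zero_le _)
    (mem_Ico.mpr ⟨le_rfl, by omega⟩ : 1 ∈ Ico 1 (Nat.log p n + 2))

lemma support_factorization_factorial_subset_primesLE (n : ℕ) :
    (n !).factorization.support ⊆ primesLE n := by
  intro p hp
  rw [support_factorization, mem_primeFactors] at hp
  rw [primesLE_eq_filter_range, mem_filter, mem_range]
  exact ⟨lt_succ_of_le (hp.1.dvd_factorial.mp hp.2.1), hp.1⟩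

end Nat

lemma Real.log_factorial_eq_sum_primesLE (n : ℕ) :
    log (n ! : ℕ) = ∑ p ∈ Nat.primesLE n, (n !).factorization p * log p := by
  rw [log_nat_eq_sum_factorization,
    Finsupp.sum_of_support_subset _ (Nat.support_factorization_factorial_subset_primesLE n) _
      (fun _ _ => by simp)]

lemma sum_primesLE_div_mul_log_le (n : ℕ) :
    ∑ p ∈ Nat.primesLE n, ((n / p : ℕ) : ℝ) * log p ≤ n * log n := calc
  _ ≤ ∑ p ∈ Nat.primesLE n, (n !).factorization p * log p := by
    gcongr with p hp
    exact Nat.div_le_factorization_factorial (Nat.prime_of_mem_primesLE hp) n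
  _ = log (n ! : ℕ) := (log_factorial_eq_sum_primesLE n).symm
  _ ≤ log ((n ^ n : ℕ) : ℝ) := by
    gcongr
    exact n.factorial_le_pow
  _ = n * log n := by push_cast; rw [log_pow]

lemma sum_primesLE_log_div_le (n : ℕ) (hn : 0 < n) :
    ∑ p ∈ Nat.primesLE n, log p / p ≤ log n + log 4 := by
  have hn' : (0 : ℝ) < n := by exact_mod_cast hn
  have hθ : ∑ p ∈ Nat.primesLE n, log p ≤ log 4 * n := by
    simpa [Chebyshev.theta_eq_sum_primesLE_log] using Chebyshev.theta_le_log4_mul_x hn'.le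
  calc ∑ p ∈ Nat.primesLE n, log p / p
      = (∑ p ∈ Nat.primesLE n, (n : ℝ) / p * log p) / n := by
        rw [sum_div]
        refine sum_congr rfl fun p _ => ?_
        field_simp
    _ ≤ (∑ p ∈ Nat.primesLE n, (((n / p : ℕ) : ℝ) + 1) * log p) / n := by
        gcongr with p
        exact (Nat.cast_div_lt_div_add_one n p).le
    _ = (∑ p ∈ Nat.primesLE n, ((n / p : ℕ) : ℝ) * log p + ∑ p ∈ Nat.primesLE n, log p) / n := by
        simp only [add_mul, one_mul, sum_add_distrib]
    _ ≤ (n * log n + log 4 * n) / n := by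
        gcongr
        exact sum_primesLE_div_mul_log_le n
    _ = log n + log 4 := by field_simp

theorem mertens_type (x : ℝ) (hx : 2 ≤ x) :
    ∑ p ∈ (Finset.range (⌊x⌋₊ + 1)).filter Nat.Prime, Real.log p / p
      ≤ Real.log x + Real.log 4 := by
  have hn : 0 < ⌊x⌋₊ := Nat.floor_pos.mpr (by linarith)
  calc _ ≤ log ⌊x⌋₊ + log 4 := sum_primesLE_log_div_le _ hn
    _ ≤ log x + log 4 := by
      gcongr
      exact Nat.floor_le (by linarith)
end

section
/- For every integer n ≥ 3, the number of divisors satisfies τ(n) < n^{3/log(log n)}. -/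
/-!
For `t ≥ log 2` compare `τ(n) = ∏ (a_p + 1)` with `n ^ (1/t) = ∏ (p ^ a_p) ^ (1/t)` prime by prime:
a prime `p ≥ e^t` has `(p ^ a) ^ (1/t) ≥ e^a ≥ a + 1`, and each of the at most `e^t` smaller primes
loses at most a factor `t / log 2`. Hence `τ(n) ≤ (t / log 2) ^ e^t · n ^ (1/t)`. For `L = log log n > 3`
and `t = L / 2` the first factor is below `n ^ (1/L)`, because `L log L < e^(L/2)`; for `L ≤ 3` the
trivial bound `τ(n) < n ≤ n ^ (3/L)` suffices.
-/

open Real Finset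

namespace Nat

theorem card_divisors_lt_self {n : ℕ} (hn : 3 ≤ n) : #n.divisors < n := by
  have hsub : n.divisors ⊆ (Ico 1 (n + 1)).erase (n - 1) := by
    intro d hd
    refine mem_erase.2 ⟨?_, mem_Ico.2 ⟨pos_of_mem_divisors hd, lt_succ_of_le (divisor_le hd)⟩⟩
    rintro rfl
    have h : n - 1 ∣ n - (n - 1) := Nat.dvd_sub (dvd_of_mem_divisors hd) dvd_rfl
    rw [Nat.sub_sub_self (by omega : 1 ≤ n)] at h
    have := Nat.le_of_dvd one_pos h
    omega
  have := card_le_card hsub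
  rw [card_erase_of_mem (mem_Ico.2 ⟨by omega, by omega⟩), card_Ico] at this
  omega

end Nat

lemma rpow_pow_eq_exp {p : ℝ} (hp : 0 < p) (a : ℕ) (s : ℝ) :
    (p ^ a) ^ s = exp (a * log p * s) := by
  rw [rpow_def_of_pos (pow_pos hp a), log_pow]

lemma add_one_le_rpow_pow_inv_of_exp_le {p t : ℝ} (ht : 0 < t) (hp : exp t ≤ p) (a : ℕ) :
    (a : ℝ) + 1 ≤ (p ^ a) ^ t⁻¹ := by
  have hp0 : 0 < p := (exp_pos t).trans_le hp
  have hlog : 1 ≤ log p / t := (one_le_div ht).2 ((le_log_iff_exp_le hp0).2 hp)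
  calc (a : ℝ) + 1 ≤ exp a := add_one_le_exp _
    _ ≤ exp (a * (log p / t)) := exp_le_exp.2 (le_mul_of_one_le_right a.cast_nonneg hlog)
    _ = (p ^ a) ^ t⁻¹ := by rw [rpow_pow_eq_exp hp0, mul_div_assoc']; rfl

lemma add_one_mul_le_rpow_pow_inv {p t : ℝ} (ht : log 2 ≤ t) (hp : 2 ≤ p) (a : ℕ) :
    ((a : ℝ) + 1) * (log 2 / t) ≤ (p ^ a) ^ t⁻¹ := by
  have ht0 : 0 < t := (log_pos one_lt_two).trans_le ht
  have hc : log 2 / t ≤ 1 := (div_le_one ht0).2 ht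
  calc ((a : ℝ) + 1) * (log 2 / t) ≤ a * (log 2 / t) + 1 := by nlinarith
    _ ≤ exp (a * (log 2 / t)) := add_one_le_exp _
    _ ≤ exp (a * (log p / t)) := by gcongr
    _ = (p ^ a) ^ t⁻¹ := by rw [rpow_pow_eq_exp (by linarith), mul_div_assoc']; rfl

lemma card_filter_natCast_lt_le {s : Finset ℕ} (hs : 0 ∉ s) {x : ℝ} (hx : 0 ≤ x) :
    (#(s.filter fun p : ℕ => (p : ℝ) < x) : ℝ) ≤ x := by
  have hsub : (s.filter fun p : ℕ => (p : ℝ) < x) ⊆ Icc 1 ⌊x⌋₊ := by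
    intro p hp
    obtain ⟨hps, hpx⟩ := mem_filter.1 hp
    exact mem_Icc.2 ⟨Nat.one_le_iff_ne_zero.2 (ne_of_mem_of_not_mem hps hs),
      Nat.le_floor hpx.le⟩
  calc (#(s.filter fun p : ℕ => (p : ℝ) < x) : ℝ) ≤ ⌊x⌋₊ := by
        exact_mod_cast (card_le_card hsub).trans (by simp)
    _ ≤ x := Nat.floor_le hx

theorem Nat.card_divisors_le_rpow_mul_rpow_inv {n : ℕ} (hn : n ≠ 0) {t : ℝ}
    (ht : Real.log 2 ≤ t) :
    (#n.divisors : ℝ) ≤ (t / Real.log 2) ^ exp t * (n : ℝ) ^ t⁻¹ := by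
  have ht0 : 0 < t := (Real.log_pos one_lt_two).trans_le ht
  have hC : 1 ≤ t / Real.log 2 := (one_le_div (Real.log_pos one_lt_two)).2 ht
  have hfactor : ∀ p ∈ n.primeFactors, (n.factorization p + 1 : ℝ) ≤
      (if (p : ℝ) < exp t then t / Real.log 2 else 1) * ((p : ℝ) ^ n.factorization p) ^ t⁻¹ := by
    intro p hp
    have hp2 : (2 : ℝ) ≤ p := by exact_mod_cast (Nat.prime_of_mem_primeFactors hp).two_le
    split_ifs with hpt
    · rw [← inv_div, le_inv_mul_iff₀ (by positivity), mul_comm]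
      exact add_one_mul_le_rpow_pow_inv ht hp2 _
    · rw [one_mul]
      exact add_one_le_rpow_pow_inv_of_exp_le ht0 (not_lt.1 hpt) _
  have hn_prod : (n : ℝ) = ∏ p ∈ n.primeFactors, (p : ℝ) ^ n.factorization p := by
    exact_mod_cast Nat.prod_primeFactors_pow_factorization hn
  calc (#n.divisors : ℝ) = ∏ p ∈ n.primeFactors, (n.factorization p + 1 : ℝ) := by
        rw [Nat.card_divisors hn]; push_cast; rfl
    _ ≤ ∏ p ∈ n.primeFactors,
          (if (p : ℝ) < exp t then t / Real.log 2 else 1) * ((p : ℝ) ^ n.factorization p) ^ t⁻¹ :=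
        prod_le_prod (fun _ _ => by positivity) hfactor
    _ = (t / Real.log 2) ^ #(n.primeFactors.filter fun p : ℕ => (p : ℝ) < exp t) *
          (n : ℝ) ^ t⁻¹ := by
        rw [prod_mul_distrib, ← prod_filter, prod_const,
          finsetProd_rpow _ _ (fun _ _ => by positivity), hn_prod]
    _ ≤ (t / Real.log 2) ^ exp t * (n : ℝ) ^ t⁻¹ := by
        rw [← rpow_natCast]
        gcongr
        exact card_filter_natCast_lt_le
          (fun h => Nat.not_prime_zero (Nat.prime_of_mem_primeFactors h)) (exp_pos t).le

lemma mul_log_lt_exp_half {L : ℝ} (hL : 0 < L) : L * log L < exp (L / 2) := by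
  have hlog4 : log 4 < 3 / 2 := by
    rw [show (4 : ℝ) = 2 ^ 2 by norm_num, log_pow]
    linarith [log_two_lt_d9]
  have hsq : L ^ 2 < exp (1 + L / 2) := by
    have h := log_le_sub_one_of_pos (div_pos hL four_pos)
    rw [log_div hL.ne' four_ne_zero] at h
    rw [← exp_log (pow_pos hL 2), log_pow]
    gcongr
    push_cast
    linarith
  have hlogL : log L ≤ L / exp 1 := by
    have h := log_le_sub_one_of_pos (div_pos hL (exp_pos 1))
    rw [log_div hL.ne' (exp_pos 1).ne', log_exp] at h
    linarith
  calc L * log L ≤ L * (L / exp 1) := by gcongr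
    _ = L ^ 2 / exp 1 := by ring
    _ < exp (1 + L / 2) / exp 1 := by gcongr
    _ = exp (L / 2) := by rw [exp_add, mul_div_cancel_left₀ _ (exp_pos 1).ne']

lemma div_two_div_log_two_rpow_exp_lt {L : ℝ} (hL : 2 * log 2 ≤ L) :
    (L / 2 / log 2) ^ exp (L / 2) < exp (exp L / L) := by
  have hlog2 : 1 / 2 < log 2 := by linarith [log_two_gt_d9]
  have hL0 : 0 < L := by linarith
  have hC0 : 0 < L / 2 / log 2 := by positivity
  have hCL : L / 2 / log 2 ≤ L := by
    rw [div_div, div_le_iff₀ (by positivity)]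
    nlinarith
  have hT : exp L = exp (L / 2) * exp (L / 2) := by rw [← exp_add, add_halves]
  have hlogL : log L < exp (L / 2) / L := by
    rw [lt_div_iff₀ hL0, mul_comm]
    exact mul_log_lt_exp_half hL0
  rw [rpow_def_of_pos hC0, exp_lt_exp, hT, mul_div_right_comm]
  calc log (L / 2 / log 2) * exp (L / 2) ≤ log L * exp (L / 2) := by gcongr
    _ < exp (L / 2) / L * exp (L / 2) := by gcongr

theorem tau_simple_bound (n : ℕ) (hn : 3 ≤ n) :
    (n.divisors.card : ℝ) < (n : ℝ) ^ (3 / Real.log (Real.log n)) := by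
  have hn3 : (3 : ℝ) ≤ n := by exact_mod_cast hn
  have hn1 : (1 : ℝ) < n := by linarith
  have hlog : 1 < log n := by
    rw [lt_log_iff_exp_lt (by linarith)]
    linarith [exp_one_lt_d9]
  set L := log (log n)
  have hL0 : 0 < L := log_pos hlog
  rcases le_or_gt L 3 with hL | hL
  · calc (#n.divisors : ℝ) < n := by exact_mod_cast Nat.card_divisors_lt_self hn
      _ = (n : ℝ) ^ (1 : ℝ) := (rpow_one _).symm
      _ ≤ (n : ℝ) ^ (3 / L) := rpow_le_rpow_of_exponent_le hn1.le ((one_le_div hL0).2 hL)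
  · have hn_rpow : (n : ℝ) ^ (1 / L) = exp (exp L / L) := by
      rw [rpow_def_of_pos (by linarith), exp_log (by linarith), mul_one_div]
    calc (#n.divisors : ℝ) ≤ (L / 2 / log 2) ^ exp (L / 2) * (n : ℝ) ^ (L / 2)⁻¹ :=
          Nat.card_divisors_le_rpow_mul_rpow_inv (by omega) (by linarith [log_two_lt_d9])
      _ < (n : ℝ) ^ (1 / L) * (n : ℝ) ^ (2 / L) := by
          rw [hn_rpow, inv_div]
          gcongr
          exact div_two_div_log_two_rpow_exp_lt (by linarith [log_two_lt_d9])
      _ = (n : ℝ) ^ (3 / L) := by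
          rw [← rpow_add (by linarith)]
          ring_nf
end

section
/- For every real z > 20, ∑_{d > z, d squarefree} 2^{ω(d)}/d² < 3(log z)/z, where ω(d) is the number of distinct prime factors of d. -/
open Finset

private lemma aux_sum_Ico_le {m N : ℕ} (hm : 1 ≤ m) :
    ∑ b ∈ Ico m N, ((b : ℝ) ^ 2)⁻¹ ≤ ((m : ℝ) ^ 2)⁻¹ + (m : ℝ)⁻¹ := by
  have hsub : Ico m N ⊆ insert m (Ioc m (max m N)) := by
    intro x hx
    rw [mem_Ico] at hx
    simp only [mem_insert, mem_Ioc]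
    rcases eq_or_lt_of_le hx.1 with h | h
    · exact Or.inl h.symm
    · exact Or.inr ⟨h, hx.2.le.trans (le_max_right _ _)⟩
  calc ∑ b ∈ Ico m N, ((b : ℝ) ^ 2)⁻¹
      ≤ ∑ b ∈ insert m (Ioc m (max m N)), ((b : ℝ) ^ 2)⁻¹ :=
        sum_le_sum_of_subset_of_nonneg hsub (fun i _ _ => by positivity)
    _ = ((m : ℝ) ^ 2)⁻¹ + ∑ b ∈ Ioc m (max m N), ((b : ℝ) ^ 2)⁻¹ := by
        rw [sum_insert (by simp)]
    _ ≤ ((m : ℝ) ^ 2)⁻¹ + (m : ℝ)⁻¹ := by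
        have h1 := sum_Ioc_inv_sq_le_sub (α := ℝ)
          (Nat.one_le_iff_ne_zero.mp hm) (le_max_left m N)
        have h2 : (0:ℝ) ≤ ((max m N : ℕ) : ℝ)⁻¹ := by positivity
        linarith

private lemma aux_tsum_ind_le {m : ℕ} (hm : 1 ≤ m) :
    ∑' b : ℕ, (if m ≤ b then ((b : ℝ) ^ 2)⁻¹ else 0) ≤ ((m : ℝ) ^ 2)⁻¹ + (m : ℝ)⁻¹ := by
  apply Real.tsum_le_of_sum_range_le (fun n => by positivity)
  intro N
  have h : ∑ b ∈ range N, (if m ≤ b then ((b : ℝ) ^ 2)⁻¹ else 0)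
      = ∑ b ∈ Ico m N, ((b : ℝ) ^ 2)⁻¹ := by
    rw [← sum_filter]
    congr 1
    ext x
    simp [mem_filter, mem_range, mem_Ico, and_comm]
  rw [h]
  exact aux_sum_Ico_le hm

private lemma aux_tsum_shift_le {k : ℕ} (hk : 1 ≤ k) :
    ∑' j : ℕ, (((j + k : ℕ) : ℝ) ^ 2)⁻¹ ≤ ((k : ℝ) ^ 2)⁻¹ + (k : ℝ)⁻¹ := by
  apply Real.tsum_le_of_sum_range_le (fun n => by positivity)
  intro N
  have h : ∑ j ∈ range N, (((j + k : ℕ) : ℝ) ^ 2)⁻¹ = ∑ b ∈ Ico k (k + N), ((b : ℝ) ^ 2)⁻¹ := by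
    rw [Finset.sum_Ico_eq_sum_range]
    simp only [Nat.add_sub_cancel_left]
    exact (Finset.sum_congr rfl fun i _ => by rw [add_comm]).symm
  rw [h]
  exact aux_sum_Ico_le hk

private noncomputable def Fz (z : ℝ) : ℕ × ℕ → ℝ := fun p =>
  if z < ((p.1 * p.2 : ℕ) : ℝ) then ((p.1 : ℝ) ^ 2)⁻¹ * ((p.2 : ℝ) ^ 2)⁻¹ else 0

private noncomputable def Gz (z : ℝ) : ℕ × ℕ → ℝ := fun p =>
  if Squarefree (p.1 * p.2) ∧ z < ((p.1 * p.2 : ℕ) : ℝ)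
    then (((p.1 * p.2 : ℕ) : ℝ) ^ 2)⁻¹ else 0

private lemma Fz_nonneg (z : ℝ) (p : ℕ × ℕ) : 0 ≤ Fz z p := by
  unfold Fz; split <;> positivity

private lemma Gz_nonneg (z : ℝ) (p : ℕ × ℕ) : 0 ≤ Gz z p := by
  unfold Gz; split <;> positivity

private lemma Gz_le_Fz (z : ℝ) (p : ℕ × ℕ) : Gz z p ≤ Fz z p := by
  unfold Gz Fz
  by_cases h : Squarefree (p.1 * p.2) ∧ z < ((p.1 * p.2 : ℕ) : ℝ)
  · rw [if_pos h, if_pos h.2]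
    push_cast
    rw [mul_pow, mul_inv]
  · rw [if_neg h]
    split
    · positivity
    · exact le_refl 0

private lemma summable_sq_inv : Summable (fun n : ℕ => ((n : ℝ) ^ 2)⁻¹) :=
  Real.summable_nat_pow_inv.mpr one_lt_two

private lemma summable_Fz (z : ℝ) : Summable (Fz z) := by
  have h1 : Summable fun n : ℕ => ‖((n : ℝ) ^ 2)⁻¹‖ := summable_norm_iff.mpr summable_sq_inv
  have hmul : Summable (fun p : ℕ × ℕ => ((p.1 : ℝ) ^ 2)⁻¹ * ((p.2 : ℝ) ^ 2)⁻¹) := by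
    apply summable_mul_of_summable_norm h1 h1
  apply hmul.of_nonneg_of_le (Fz_nonneg z)
  intro p
  unfold Fz
  split
  · exact le_refl _
  · positivity

private lemma summable_Gz (z : ℝ) : Summable (Gz z) :=
  (summable_Fz z).of_nonneg_of_le (Gz_nonneg z) (Gz_le_Fz z)

private lemma aux_inner_le (z : ℝ) (hz0 : 0 < z) {a : ℕ} (ha : 1 ≤ a) :
    ∑' b : ℕ, Fz z (a, b)
      ≤ ((a : ℝ) ^ 2)⁻¹ *
        ((((⌊z / a⌋₊ + 1 : ℕ) : ℝ) ^ 2)⁻¹ + ((⌊z / a⌋₊ + 1 : ℕ) : ℝ)⁻¹) := by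
  have ha0 : (0:ℝ) < a := by exact_mod_cast ha
  set m : ℕ := ⌊z / a⌋₊ + 1 with hm
  have hcond : ∀ b : ℕ, (z < ((a * b : ℕ) : ℝ)) ↔ m ≤ b := by
    intro b
    rw [Nat.cast_mul]
    constructor
    · intro h
      have h1 : z / a < b := (div_lt_iff₀ ha0).mpr (by linarith [mul_comm (a:ℝ) (b:ℝ)])
      have h2 : ⌊z / a⌋₊ < b := (Nat.floor_lt (by positivity)).mpr h1
      omega
    · intro h
      have h2 : ⌊z / a⌋₊ < b := by omega
      have h1 : z / a < b := (Nat.floor_lt (by positivity)).mp h2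
      calc z = (z / a) * a := by field_simp
        _ < b * a := by nlinarith
        _ = (a : ℝ) * b := by ring
  have hrw : ∀ b : ℕ, Fz z (a, b) = ((a : ℝ) ^ 2)⁻¹ * (if m ≤ b then ((b : ℝ) ^ 2)⁻¹ else 0) := by
    intro b
    show (if z < ((a * b : ℕ) : ℝ) then ((a : ℝ) ^ 2)⁻¹ * ((b : ℝ) ^ 2)⁻¹ else 0) = _
    rw [if_congr (hcond b) rfl rfl, mul_ite, mul_zero]
  calc ∑' b : ℕ, Fz z (a, b)
      = ((a : ℝ) ^ 2)⁻¹ * ∑' b : ℕ, (if m ≤ b then ((b : ℝ) ^ 2)⁻¹ else 0) := by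
        rw [tsum_congr hrw, tsum_mul_left]
    _ ≤ _ := mul_le_mul_of_nonneg_left (aux_tsum_ind_le (Nat.le_add_left 1 _)) (by positivity)

private lemma aux_inner_le' (z : ℝ) (hz0 : 0 < z) {a : ℕ} (ha : 1 ≤ a) :
    ∑' b : ℕ, Fz z (a, b) ≤ (z ^ 2)⁻¹ + ((a : ℝ) * z)⁻¹ := by
  have ha0 : (0:ℝ) < a := by exact_mod_cast ha
  refine (aux_inner_le z hz0 ha).trans ?_
  have hm : z / a < ((⌊z / a⌋₊ + 1 : ℕ) : ℝ) := by
    push_cast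
    exact Nat.lt_floor_add_one _
  have hza : 0 < z / a := by positivity
  have h1 : (((⌊z / a⌋₊ + 1 : ℕ) : ℝ))⁻¹ ≤ (z / a)⁻¹ := by
    apply inv_anti₀ hza hm.le
  have h2 : ((((⌊z / a⌋₊ + 1 : ℕ) : ℝ)) ^ 2)⁻¹ ≤ ((z / a) ^ 2)⁻¹ := by
    apply inv_anti₀ (by positivity)
    exact pow_le_pow_left₀ hza.le hm.le 2
  calc ((a : ℝ) ^ 2)⁻¹ * ((((⌊z / a⌋₊ + 1 : ℕ) : ℝ) ^ 2)⁻¹ + ((⌊z / a⌋₊ + 1 : ℕ) : ℝ)⁻¹)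
      ≤ ((a : ℝ) ^ 2)⁻¹ * (((z / a) ^ 2)⁻¹ + (z / a)⁻¹) := by
        apply mul_le_mul_of_nonneg_left (add_le_add h2 h1) (by positivity)
    _ = (z ^ 2)⁻¹ + ((a : ℝ) * z)⁻¹ := by
        field_simp

private lemma aux_inner_crude (z : ℝ) (hz0 : 0 < z) {a : ℕ} (ha : 1 ≤ a) :
    ∑' b : ℕ, Fz z (a, b) ≤ 2 * ((a : ℝ) ^ 2)⁻¹ := by
  refine (aux_inner_le z hz0 ha).trans ?_
  have hm1 : (1 : ℝ) ≤ ((⌊z / a⌋₊ + 1 : ℕ) : ℝ) := by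
    push_cast; linarith [Nat.cast_nonneg (α := ℝ) ⌊z / a⌋₊]
  have h1 : (((⌊z / a⌋₊ + 1 : ℕ) : ℝ))⁻¹ ≤ 1 := by
    rw [inv_le_one_iff₀]; right; exact hm1
  have h2 : ((((⌊z / a⌋₊ + 1 : ℕ) : ℝ)) ^ 2)⁻¹ ≤ 1 := by
    rw [inv_le_one_iff₀]; right; nlinarith
  have h3 : ((a : ℝ) ^ 2)⁻¹ ≤ 1 * ((a : ℝ) ^ 2)⁻¹ := by rw [one_mul]
  calc ((a : ℝ) ^ 2)⁻¹ * ((((⌊z / a⌋₊ + 1 : ℕ) : ℝ) ^ 2)⁻¹ + ((⌊z / a⌋₊ + 1 : ℕ) : ℝ)⁻¹)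
      ≤ ((a : ℝ) ^ 2)⁻¹ * 2 := by
        apply mul_le_mul_of_nonneg_left (by linarith) (by positivity)
    _ = 2 * ((a : ℝ) ^ 2)⁻¹ := mul_comm _ _

private lemma aux_inner_zero (z : ℝ) (hz0 : 0 < z) : ∑' b : ℕ, Fz z (0, b) = 0 := by
  have : ∀ b : ℕ, Fz z (0, b) = 0 := by
    intro b
    show (if z < ((0 * b : ℕ) : ℝ) then _ else 0) = 0
    rw [if_neg]
    push_cast
    simp
    linarith
  rw [tsum_congr this, tsum_zero]

private lemma aux_card {d : ℕ} (hd : Squarefree d) :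
    d.divisorsAntidiagonal.card = 2 ^ d.primeFactors.card := by
  have hd0 : d ≠ 0 := hd.ne_zero
  rw [← Nat.map_div_right_divisors, Finset.card_map, Nat.card_divisors hd0]
  rw [Finset.prod_congr rfl (fun p hp => ?_), Finset.prod_const]
  have h1 : d.factorization p ≤ 1 := hd.natFactorization_le_one p
  have h2 : 1 ≤ d.factorization p := by
    rw [Nat.mem_primeFactors] at hp
    exact hp.1.factorization_pos_of_dvd hd0 hp.2.1
  omega

private lemma aux_fiber (z : ℝ) (hz0 : 0 < z) (d : ℕ) :
    ∑' (p : (fun p : ℕ × ℕ => p.1 * p.2) ⁻¹' {d}), Gz z p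
      = if Squarefree d ∧ z < (d : ℝ)
          then (2 : ℝ) ^ d.primeFactors.card / (d : ℝ) ^ 2 else 0 := by
  rcases eq_or_ne d 0 with rfl | hd
  · have hall : ∀ p : (fun p : ℕ × ℕ => p.1 * p.2) ⁻¹' {0}, Gz z p.val = 0 := by
      rintro ⟨p, hp⟩
      simp only [Set.mem_preimage, Set.mem_singleton_iff] at hp
      show (if Squarefree (p.1 * p.2) ∧ z < ((p.1 * p.2 : ℕ) : ℝ) then _ else 0) = 0
      rw [hp]
      rw [if_neg (fun hcon => not_squarefree_zero hcon.1)]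
    rw [tsum_congr hall, tsum_zero,
      if_neg (fun hcon => not_squarefree_zero hcon.1)]
  · rw [show (fun p : ℕ × ℕ => p.1 * p.2) ⁻¹' {d} = ↑d.divisorsAntidiagonal by
      ext p; simp [Nat.mem_divisorsAntidiagonal, hd]]
    rw [Finset.tsum_subtype' d.divisorsAntidiagonal (Gz z)]
    by_cases h : Squarefree d ∧ z < (d : ℝ)
    · rw [if_pos h]
      have hterm : ∀ p ∈ d.divisorsAntidiagonal, Gz z p = ((d : ℝ) ^ 2)⁻¹ := by
        intro p hp
        obtain ⟨hpd, -⟩ := Nat.mem_divisorsAntidiagonal.mp hp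
        show (if Squarefree (p.1 * p.2) ∧ z < ((p.1 * p.2 : ℕ) : ℝ) then
          (((p.1 * p.2 : ℕ) : ℝ) ^ 2)⁻¹ else 0) = ((d : ℝ) ^ 2)⁻¹
        rw [hpd, if_pos h]
      rw [Finset.sum_congr rfl hterm, Finset.sum_const, aux_card h.1, nsmul_eq_mul]
      push_cast
      rw [div_eq_mul_inv]
    · rw [if_neg h]
      apply Finset.sum_eq_zero
      intro p hp
      obtain ⟨hpd, -⟩ := Nat.mem_divisorsAntidiagonal.mp hp
      show (if Squarefree (p.1 * p.2) ∧ z < ((p.1 * p.2 : ℕ) : ℝ) then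
        (((p.1 * p.2 : ℕ) : ℝ) ^ 2)⁻¹ else 0) = 0
      rw [hpd, if_neg h]

set_option maxHeartbeats 1600000 in
theorem squarefree_tail_sum (z : ℝ) (hz : 20 < z) :
    (∑' d : ℕ, if Squarefree d ∧ z < (d : ℝ)
        then (2 : ℝ) ^ d.primeFactors.card / (d : ℝ) ^ 2 else 0)
      < 3 * Real.log z / z := by
  have hz0 : (0:ℝ) < z := by linarith
  have hGsum : Summable (Gz z) := summable_Gz z
  have hFsum : Summable (Fz z) := summable_Fz z
  have hkey : HasSum (fun d : ℕ => if Squarefree d ∧ z < (d : ℝ)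
      then (2 : ℝ) ^ d.primeFactors.card / (d : ℝ) ^ 2 else 0) (∑' p, Gz z p) := by
    have h0 := hGsum.hasSum.tsum_fiberwise (fun p : ℕ × ℕ => p.1 * p.2)
    rwa [funext (aux_fiber z hz0)] at h0
  rw [hkey.tsum_eq]
  set n : ℕ := ⌊z⌋₊ with hn
  have hnz : (n : ℝ) ≤ z := Nat.floor_le hz0.le
  have hzn : z < ((n + 1 : ℕ) : ℝ) := by push_cast; exact Nat.lt_floor_add_one z
  have hI : Summable (fun a : ℕ => ∑' b : ℕ, Fz z (a, b)) := hFsum.prod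
  have h2 : ∑' p, Gz z p ≤ ∑' p, Fz z p := Summable.tsum_le_tsum (Gz_le_Fz z) hGsum hFsum
  have h3 : ∑' p, Fz z p = ∑' (a : ℕ), ∑' (b : ℕ), Fz z (a, b) := Summable.tsum_prod hFsum
  have h4 : ∑' (a : ℕ), ∑' (b : ℕ), Fz z (a, b)
      = (∑ a ∈ range (n+1), ∑' (b : ℕ), Fz z (a, b))
        + ∑' (j : ℕ), ∑' (b : ℕ), Fz z (j + (n+1), b) :=
    (Summable.sum_add_tsum_nat_add (n+1) hI).symm
  have hA : ∑ a ∈ range (n+1), ∑' (b : ℕ), Fz z (a, b)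
      ≤ (n : ℝ) * (z^2)⁻¹ + (harmonic n : ℝ) / z := by
    have hle : ∀ a ∈ range (n+1), ∑' (b : ℕ), Fz z (a, b)
        ≤ (if a = 0 then 0 else (z^2)⁻¹ + ((a : ℝ) * z)⁻¹) := by
      intro a _
      rcases Nat.eq_zero_or_pos a with rfl | ha
      · rw [if_pos rfl, aux_inner_zero z hz0]
      · rw [if_neg ha.ne']
        exact aux_inner_le' z hz0 ha
    refine (Finset.sum_le_sum hle).trans ?_
    rw [Finset.sum_range_succ']
    rw [if_pos rfl, add_zero]
    have hcongr : ∀ i ∈ range n, (if i + 1 = 0 then (0:ℝ) else (z^2)⁻¹ + (((i+1 : ℕ) : ℝ) * z)⁻¹)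
        = (z^2)⁻¹ + (((i+1 : ℕ) : ℝ) * z)⁻¹ := fun i _ => if_neg (Nat.succ_ne_zero i)
    rw [Finset.sum_congr rfl hcongr, Finset.sum_add_distrib, Finset.sum_const, card_range,
      nsmul_eq_mul]
    have hh : ∑ i ∈ range n, (((i+1 : ℕ) : ℝ) * z)⁻¹ = (harmonic n : ℝ) / z := by
      rw [harmonic]
      push_cast
      rw [Finset.sum_div]
      refine Finset.sum_congr rfl fun i _ => ?_
      rw [mul_inv, div_eq_mul_inv, mul_comm]
    rw [hh]
  have hB : ∑' (j : ℕ), ∑' (b : ℕ), Fz z (j + (n+1), b)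
      ≤ 2 * (((n+1 : ℕ) : ℝ)^2)⁻¹ + 2 * ((n+1 : ℕ) : ℝ)⁻¹ := by
    have hle : ∀ j : ℕ, ∑' (b : ℕ), Fz z (j + (n+1), b)
        ≤ 2 * (((j + (n+1) : ℕ) : ℝ)^2)⁻¹ :=
      fun j => aux_inner_crude z hz0 (by omega)
    have hs1 : Summable (fun j : ℕ => ∑' (b : ℕ), Fz z (j + (n+1), b)) :=
      (summable_nat_add_iff (n+1)).mpr hI
    have hs2 : Summable (fun j : ℕ => 2 * (((j + (n+1) : ℕ) : ℝ)^2)⁻¹) :=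
      ((summable_nat_add_iff (n+1)).mpr summable_sq_inv).mul_left 2
    calc ∑' (j : ℕ), ∑' (b : ℕ), Fz z (j + (n+1), b)
        ≤ ∑' (j : ℕ), 2 * (((j + (n+1) : ℕ) : ℝ)^2)⁻¹ := Summable.tsum_le_tsum hle hs1 hs2
      _ = 2 * ∑' (j : ℕ), (((j + (n+1) : ℕ) : ℝ)^2)⁻¹ := tsum_mul_left
      _ ≤ 2 * ((((n+1 : ℕ) : ℝ)^2)⁻¹ + ((n+1 : ℕ) : ℝ)⁻¹) := by
          have := aux_tsum_shift_le (k := n+1) (by omega)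
          linarith
      _ = 2 * (((n+1 : ℕ) : ℝ)^2)⁻¹ + 2 * ((n+1 : ℕ) : ℝ)⁻¹ := by ring
  have hharm : (harmonic n : ℝ) ≤ 1 + Real.log z :=
    harmonic_floor_le_one_add_log z (by linarith)
  have hlogz : (2.77 : ℝ) < Real.log z := by
    have h16 : Real.log 16 ≤ Real.log z := Real.log_le_log (by norm_num) (by linarith)
    have h16' : Real.log 16 = 4 * Real.log 2 := by
      rw [show (16:ℝ) = 2^4 by norm_num, Real.log_pow]
      push_cast; ring
    have := Real.log_two_gt_d9
    linarith
  calc ∑' p, Gz z p ≤ ∑' p, Fz z p := h2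
    _ = _ := h3
    _ = _ := h4
    _ ≤ ((n : ℝ) * (z^2)⁻¹ + (harmonic n : ℝ) / z) + (2 * (z^2)⁻¹ + 2 * z⁻¹) := by
        refine add_le_add hA (hB.trans ?_)
        have hi1 : ((n+1 : ℕ) : ℝ)⁻¹ ≤ z⁻¹ := inv_anti₀ hz0 hzn.le
        have hi2 : (((n+1 : ℕ) : ℝ)^2)⁻¹ ≤ (z^2)⁻¹ := by
          apply inv_anti₀ (by positivity)
          nlinarith [hzn.le, hz0]
        linarith
    _ ≤ (z * (z^2)⁻¹ + (1 + Real.log z) / z) + (2 * (z^2)⁻¹ + 2 * z⁻¹) := by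
        gcongr
    _ < 3 * Real.log z / z := by
        have ht : (0:ℝ) < z⁻¹ := by positivity
        have htt : z⁻¹ < (20:ℝ)⁻¹ := by
          apply inv_strictAnti₀ (by norm_num) hz
        have e1 : z * (z^2)⁻¹ = z⁻¹ := by
          rw [sq, mul_inv, ← mul_assoc, mul_inv_cancel₀ hz0.ne', one_mul]
        have e2 : (1 + Real.log z) / z = (1 + Real.log z) * z⁻¹ := div_eq_mul_inv _ _
        have e3 : 3 * Real.log z / z = 3 * Real.log z * z⁻¹ := div_eq_mul_inv _ _
        have e4 : (z^2)⁻¹ = z⁻¹ * z⁻¹ := by rw [sq, mul_inv]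
        rw [e1, e2, e3, e4]
        have h5 : (0:ℝ) < 2 * Real.log z - 4 - 2 * z⁻¹ := by nlinarith
        nlinarith [mul_pos ht h5]
end

section
/- For every squarefree positive integer k and every positive integer n, the number of pairs (x,d) of positive integers with n = x² + k·d² is at most 6·τ(n), where τ(n) is the number of divisors of n. -/
/-!
Write a representation as `x = g X`, `y = g Y` with `X, Y` coprime, so that `n = g² m` with
`m = X² + k Y²`. Then `r = X / Y mod m` is a square root of `-k` modulo `m`, and it determines
`(X, Y)`: two such pairs with the same root satisfy `X Y' ≡ X' Y (mod m)` with both sides `< m`.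

Since `k` is squarefree, the square roots of `-k` modulo an odd prime power `p ^ f ∥ m` are
`±ρ`, and modulo `2 ^ (f + 1)` they agree up to sign modulo `2 ^ f`. So `r` is determined by
recording, for each `p ^ f ∥ m`, whether `r mod p ^ f` lies in the lower half of `ZMod (p ^ f)`,
plus one further bit at `2`. The product `e` of the recorded prime powers is a unitary divisor
of `m`, and `g` can be read off from `d = g e ∣ n`, because `v_p(d)` is either `v_p(g)` or
`v_p(n) - v_p(g)`. Hence `(x, y) ↦ (d, bit)` embeds the representations into
`divisors n × Bool`, and there are at most `2 τ(n)` of them.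
-/

theorem not_dvd_of_sq_dvd_sq_add_of_squarefree {R : Type*} [CommRing R] {p a k : R}
    (hp : ¬IsUnit p) (hk : Squarefree k) (h : p ^ 2 ∣ a ^ 2 + k) : ¬p ∣ a := by
  intro hpa
  have hpk : p ^ 2 ∣ k := (dvd_add_right (pow_dvd_pow_of_dvd hpa 2)).1 h
  exact hp (hk p (by rwa [← sq]))

namespace Int

theorem prime_pow_dvd_sub_or_add_of_dvd_sq_sub_sq {p a b : ℤ} (hp : Prime p) (hp2 : ¬p ∣ 2)
    (ha : ¬p ∣ a) {f : ℕ} (h : p ^ f ∣ a ^ 2 - b ^ 2) :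
    p ^ f ∣ a - b ∨ p ^ f ∣ a + b := by
  rw [sq_sub_sq] at h
  by_cases hsub : p ∣ a - b
  · have hadd : ¬p ∣ a + b := fun hadd ↦ by
      have h2a : p ∣ 2 * a := by
        rw [show 2 * a = a + b + (a - b) by ring]; exact dvd_add hadd hsub
      exact (hp.dvd_or_dvd h2a).elim hp2 ha
    exact .inl ((hp.coprime_iff_not_dvd.2 hadd).pow_left.dvd_of_dvd_mul_left h)
  · exact .inr ((hp.coprime_iff_not_dvd.2 hsub).pow_left.dvd_of_dvd_mul_right h)

theorem two_pow_dvd_sub_or_add_of_dvd_sq_sub_sq {a b : ℤ} (ha : Odd a) {f : ℕ}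
    (h : 2 ^ (f + 1) ∣ a ^ 2 - b ^ 2) : 2 ^ f ∣ a - b ∨ 2 ^ f ∣ a + b := by
  have hb : Odd b := by
    have h2 : (2 : ℤ) ∣ a ^ 2 - b ^ 2 := (dvd_pow_self 2 f.succ_ne_zero).trans h
    have hb2 : Odd (b ^ 2) := by
      simpa using (ha.pow : Odd (a ^ 2)).sub_even (even_iff_two_dvd.2 h2)
    exact (Int.odd_pow.1 hb2).resolve_right two_ne_zero
  obtain ⟨u, hu⟩ : 2 ∣ a - b := (ha.sub_odd hb).two_dvd
  have hsq : a ^ 2 - b ^ 2 = 2 * (u * (2 * (u + b))) := by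
    rw [show a = 2 * u + b by linarith]; ring
  rw [hsq, pow_succ', mul_dvd_mul_iff_left two_ne_zero] at h
  have coprime_of_odd {c : ℤ} (hc : Odd c) : IsCoprime (2 ^ f) c :=
    (Int.prime_two.coprime_iff_not_dvd.2 (by simpa [← even_iff_two_dvd] using hc)).pow_left
  -- `u = (a - b) / 2` and `u + b = (a + b) / 2` add up to the odd number `a`
  rcases Int.even_or_odd u with hu2 | hu2
  · refine .inl (hu ▸ (coprime_of_odd (hu2.add_odd hb)).dvd_of_dvd_mul_left ?_)
    convert h using 1; ring
  · refine .inr ((coprime_of_odd hu2).dvd_of_dvd_mul_left ?_)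
    convert h using 2; linarith

theorem natCast_dvd_sq_sub_sq_of_dvd_sq_add {q a b k : ℕ} (ha : q ∣ a ^ 2 + k)
    (hb : q ∣ b ^ 2 + k) : (q : ℤ) ∣ (a : ℤ) ^ 2 - (b : ℤ) ^ 2 := by
  simpa using dvd_sub (Int.natCast_dvd_natCast.2 ha) (Int.natCast_dvd_natCast.2 hb)

end Int

namespace ZMod

theorem natCast_eq_or_eq_neg_of_dvd_sub_or_add {q a b : ℕ}
    (h : (q : ℤ) ∣ a - b ∨ (q : ℤ) ∣ a + b) : (a : ZMod q) = b ∨ (a : ZMod q) = -b := by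
  simpa only [← sub_eq_zero (a := (a : ZMod q)), sub_neg_eq_add, ← intCast_zmod_eq_zero_iff_dvd,
    Int.cast_sub, Int.cast_add, Int.cast_natCast] using h

theorem natCast_eq_or_eq_neg_of_prime_pow_dvd {k p f a b : ℕ} (hk : Squarefree k)
    (hp : p.Prime) (hp2 : p ≠ 2) (ha : p ^ f ∣ a ^ 2 + k) (hb : p ^ f ∣ b ^ 2 + k) :
    (a : ZMod (p ^ f)) = b ∨ (a : ZMod (p ^ f)) = -b := by
  apply natCast_eq_or_eq_neg_of_dvd_sub_or_add
  have hpZ : Prime (p : ℤ) := Nat.prime_iff_prime_int.1 hp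
  have hab := Int.natCast_dvd_sq_sub_sq_of_dvd_sq_add ha hb
  push_cast at hab ⊢
  by_cases hpa : (p : ℤ) ∣ a
  · have hf : f ≤ 1 := by
      by_contra! hf
      exact not_dvd_of_sq_dvd_sq_add_of_squarefree hpZ.not_isUnit (Int.squarefree_natCast.2 hk)
        ((pow_dvd_pow _ hf).trans (by exact_mod_cast ha)) hpa
    interval_cases f
    · simp
    · rw [pow_one, sq_sub_sq] at hab
      simpa only [pow_one] using (hpZ.dvd_or_dvd hab).symm
  · refine Int.prime_pow_dvd_sub_or_add_of_dvd_sq_sub_sq hpZ ?_ hpa hab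
    exact_mod_cast fun h ↦ hp2 ((Nat.prime_dvd_prime_iff_eq hp Nat.prime_two).1 h)

theorem natCast_eq_or_eq_neg_of_two_pow_succ_dvd {k f a b : ℕ} (hk : Squarefree k)
    (ha : 2 ^ (f + 1) ∣ a ^ 2 + k) (hb : 2 ^ (f + 1) ∣ b ^ 2 + k) :
    (a : ZMod (2 ^ f)) = b ∨ (a : ZMod (2 ^ f)) = -b := by
  apply natCast_eq_or_eq_neg_of_dvd_sub_or_add
  have hab := Int.natCast_dvd_sq_sub_sq_of_dvd_sq_add ha hb
  push_cast at hab ⊢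
  by_cases h2a : (2 : ℤ) ∣ a
  · obtain rfl : f = 0 := by
      by_contra! hf
      exact not_dvd_of_sq_dvd_sq_add_of_squarefree Int.prime_two.not_isUnit
        (Int.squarefree_natCast.2 hk)
        ((pow_dvd_pow 2 (show 2 ≤ f + 1 by omega)).trans (by exact_mod_cast ha)) h2a
    simp
  · exact Int.two_pow_dvd_sub_or_add_of_dvd_sq_sub_sq
      (Int.not_even_iff_odd.1 (by rwa [even_iff_two_dvd])) hab

def IsLowerHalf {q : ℕ} (s : ZMod q) : Prop := 2 * s.val < q

instance {q : ℕ} (s : ZMod q) : Decidable s.IsLowerHalf := inferInstanceAs (Decidable (_ < _))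

theorem eq_of_eq_or_eq_neg_of_isLowerHalf_iff {q : ℕ} [NeZero q] {s t : ZMod q}
    (h : s = t ∨ s = -t) (hst : s.IsLowerHalf ↔ t.IsLowerHalf) : s = t := by
  obtain rfl | rfl := h
  · rfl
  obtain rfl | ht := eq_or_ne t 0
  · exact neg_zero
  have : NeZero t := ⟨ht⟩
  unfold IsLowerHalf at hst
  rw [val_neg_of_ne_zero] at hst
  have := t.val_lt
  apply val_injective
  rw [val_neg_of_ne_zero]
  omega

theorem natCast_eq_of_natCast_eq_of_isLowerHalf_iff {c q a b : ℕ} (hq : q = c * 2)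
    (hab : (a : ZMod c) = b) (hlow : (a : ZMod q).IsLowerHalf ↔ (b : ZMod q).IsLowerHalf) :
    (a : ZMod q) = b := by
  rw [natCast_eq_natCast_iff'] at hab ⊢
  simp only [IsLowerHalf, val_natCast] at hlow
  subst hq
  rcases Nat.eq_zero_or_pos c with rfl | hc
  · simpa using hab
  simp only [Nat.mod_mul] at hlow ⊢
  have ha := Nat.mod_lt a hc
  have hb := Nat.mod_lt b hc
  rcases Nat.mod_two_eq_zero_or_one (a / c) with ha2 | ha2 <;>
    rcases Nat.mod_two_eq_zero_or_one (b / c) with hb2 | hb2 <;>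
    simp only [ha2, hb2] at hlow ⊢ <;> omega

theorem natCast_eq_of_forall_prime_pow {m a b : ℕ} (hm : m ≠ 0)
    (h : ∀ p ∈ m.primeFactors, (a : ZMod (p ^ m.factorization p)) = b) : (a : ZMod m) = b := by
  apply (equivPi m hm).injective
  rw [map_natCast, map_natCast]
  funext ⟨p, hp⟩
  exact h p hp

end ZMod

namespace Nat

theorem eq_of_mul_eq_of_sq_mul_eq {g g' e e' m m' : ℕ} (hg : g ≠ 0) (hg' : g' ≠ 0)
    (he : e ≠ 0) (he' : e' ≠ 0) (hm : m ≠ 0) (hm' : m' ≠ 0)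
    (hem : ∀ p, e.factorization p = 0 ∨ e.factorization p = m.factorization p)
    (hem' : ∀ p, e'.factorization p = 0 ∨ e'.factorization p = m'.factorization p)
    (hd : g * e = g' * e') (hn : g ^ 2 * m = g' ^ 2 * m') : g = g' := by
  refine Nat.eq_of_factorization_eq hg hg' fun p ↦ ?_
  have hd := congrArg (·.factorization p) hd
  have hn := congrArg (·.factorization p) hn
  simp only [factorization_mul, factorization_pow, hg, hg', he, he', hm, hm', pow_ne_zero,
    ne_eq, not_false_eq_true, Finsupp.coe_add, Pi.add_apply, Finsupp.coe_smul, Pi.smul_apply,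
    smul_eq_mul] at hd hn
  rcases hem p with h | h <;> rcases hem' p with h' | h' <;> omega

theorem Coprime.coprime_sq_add_mul_sq {X Y : ℕ} (h : X.Coprime Y) (k : ℕ) :
    Y.Coprime (X ^ 2 + k * Y ^ 2) := by
  rw [show k * Y ^ 2 = k * Y * Y by ring, coprime_add_mul_right_right]
  exact (h.pow_left 2).symm

theorem mul_lt_of_sq_add_mul_sq_eq {k X Y X' Y' m : ℕ} (hk : k ≠ 0) (hY : 0 < Y) (hX' : 0 < X')
    (hm : X ^ 2 + k * Y ^ 2 = m) (hm' : X' ^ 2 + k * Y' ^ 2 = m) : X * Y' < m := by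
  have hX : X ^ 2 < m := by
    have : 0 < k * Y ^ 2 := by positivity
    omega
  have hY' : Y' ^ 2 < m := by
    have : Y' ^ 2 ≤ k * Y' ^ 2 := Nat.le_mul_of_pos_left _ (Nat.pos_of_ne_zero hk)
    have : 0 < X' ^ 2 := by positivity
    omega
  have : (X * Y') ^ 2 < m ^ 2 := by
    rw [mul_pow, sq m]; exact Nat.mul_lt_mul'' hX hY'
  exact lt_of_pow_lt_pow_left₀ 2 (Nat.zero_le _) this

end Nat

namespace SqAddMulSq

open ZMod

def lowerHalfPart (m a : ℕ) : ℕ :=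
  (m.factorization.filter fun p ↦ (a : ZMod (p ^ m.factorization p)).IsLowerHalf).prod (· ^ ·)

/-- If `2 ^ (f + 1) ∥ m`, the square roots of `-k` modulo `2 ^ (f + 1)` agree up to sign modulo
`2 ^ f` (`ZMod.natCast_eq_or_eq_neg_of_two_pow_succ_dvd`); this bit fixes that sign. -/
def twoAdicLabel (m a : ℕ) : Bool :=
  decide (a : ZMod (2 ^ (m.factorization 2 - 1))).IsLowerHalf

theorem factorization_lowerHalfPart (m a : ℕ) :
    (lowerHalfPart m a).factorization =
      m.factorization.filter fun p ↦ (a : ZMod (p ^ m.factorization p)).IsLowerHalf :=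
  Nat.prod_pow_factorization_eq_self fun p hp ↦ by
    rw [Finsupp.support_filter, Finset.mem_filter, Nat.support_factorization] at hp
    exact Nat.prime_of_mem_primeFactors hp.1

theorem lowerHalfPart_ne_zero (m a : ℕ) : lowerHalfPart m a ≠ 0 := by
  rw [lowerHalfPart, Finsupp.prod, Finset.prod_ne_zero_iff]
  intro p hp
  rw [Finsupp.support_filter, Finset.mem_filter, Nat.support_factorization] at hp
  exact pow_ne_zero _ (Nat.prime_of_mem_primeFactors hp.1).ne_zero

theorem factorization_lowerHalfPart_eq_zero_or (m a p : ℕ) :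
    (lowerHalfPart m a).factorization p = 0 ∨
      (lowerHalfPart m a).factorization p = m.factorization p := by
  rw [factorization_lowerHalfPart, Finsupp.filter_apply]
  split_ifs <;> simp

theorem lowerHalfPart_dvd {m : ℕ} (hm : m ≠ 0) (a : ℕ) : lowerHalfPart m a ∣ m := by
  refine (Nat.factorization_le_iff_dvd (lowerHalfPart_ne_zero m a) hm).1 fun p ↦ ?_
  rcases factorization_lowerHalfPart_eq_zero_or m a p with h | h <;> simp [h]

theorem isLowerHalf_iff_of_lowerHalfPart_eq {m a b p : ℕ} (hp : p ∈ m.primeFactors)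
    (h : lowerHalfPart m a = lowerHalfPart m b) :
    (a : ZMod (p ^ m.factorization p)).IsLowerHalf ↔
      (b : ZMod (p ^ m.factorization p)).IsLowerHalf := by
  have := congrArg (·.factorization p) h
  simp only [factorization_lowerHalfPart, Finsupp.filter_apply] at this
  have hp0 : m.factorization p ≠ 0 := by
    rwa [← Finsupp.mem_support_iff, Nat.support_factorization]
  split_ifs at this <;> tauto

theorem natCast_eq_of_lowerHalfPart_eq {k m a b : ℕ} (hk : Squarefree k) (hm : m ≠ 0)
    (ha : m ∣ a ^ 2 + k) (hb : m ∣ b ^ 2 + k) (hpart : lowerHalfPart m a = lowerHalfPart m b)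
    (hlabel : twoAdicLabel m a = twoAdicLabel m b) : (a : ZMod m) = b := by
  refine natCast_eq_of_forall_prime_pow hm fun p hp ↦ ?_
  have hlow := isLowerHalf_iff_of_lowerHalfPart_eq hp hpart
  have hpa := (Nat.ordProj_dvd m p).trans ha
  have hpb := (Nat.ordProj_dvd m p).trans hb
  have : NeZero (p ^ m.factorization p) :=
    ⟨pow_ne_zero _ (Nat.prime_of_mem_primeFactors hp).ne_zero⟩
  obtain rfl | hp2 := eq_or_ne p 2
  · obtain ⟨f, hf⟩ := Nat.exists_eq_add_one_of_ne_zero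
      (Finsupp.mem_support_iff.1 (m.support_factorization ▸ hp))
    rw [hf] at hlow hpa hpb ⊢
    rw [twoAdicLabel, twoAdicLabel, hf, Nat.add_sub_cancel] at hlabel
    exact natCast_eq_of_natCast_eq_of_isLowerHalf_iff (pow_succ 2 f)
      (eq_of_eq_or_eq_neg_of_isLowerHalf_iff
        (natCast_eq_or_eq_neg_of_two_pow_succ_dvd hk hpa hpb) (decide_eq_decide.1 hlabel)) hlow
  · exact eq_of_eq_or_eq_neg_of_isLowerHalf_iff
      (natCast_eq_or_eq_neg_of_prime_pow_dvd hk (Nat.prime_of_mem_primeFactors hp) hp2 hpa hpb)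
      hlow

theorem eq_of_sq_add_mul_sq_eq_of_mul_eq {k X Y X' Y' m : ℕ} (hk : k ≠ 0)
    (hXY : X.Coprime Y) (hXY' : X'.Coprime Y') (hX : 0 < X) (hY : 0 < Y) (hX' : 0 < X')
    (hY' : 0 < Y') (hm : X ^ 2 + k * Y ^ 2 = m) (hm' : X' ^ 2 + k * Y' ^ 2 = m) {s : ZMod m}
    (hs : s * Y = X) (hs' : s * Y' = X') : X = X' ∧ Y = Y' := by
  have hcross : ((X * Y' : ℕ) : ZMod m) = (X' * Y : ℕ) := by
    push_cast; rw [← hs, ← hs']; ring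
  rw [ZMod.natCast_eq_natCast_iff',
    Nat.mod_eq_of_lt (Nat.mul_lt_of_sq_add_mul_sq_eq hk hY hX' hm hm'),
    Nat.mod_eq_of_lt (Nat.mul_lt_of_sq_add_mul_sq_eq hk hY' hX hm' hm)] at hcross
  obtain rfl : X = X' := Nat.dvd_antisymm (hXY.dvd_of_dvd_mul_right ⟨Y', hcross.symm⟩)
    (hXY'.dvd_of_dvd_mul_right ⟨Y, hcross⟩)
  exact ⟨rfl, (Nat.eq_of_mul_eq_mul_left hX hcross).symm⟩

def reprRoot (k X Y : ℕ) : ℕ :=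
  ((X : ZMod (X ^ 2 + k * Y ^ 2)) * (Y : ZMod (X ^ 2 + k * Y ^ 2))⁻¹).val

theorem natCast_reprRoot_mul {k X Y : ℕ} (hXY : X.Coprime Y) (hX : 0 < X) :
    (reprRoot k X Y : ZMod (X ^ 2 + k * Y ^ 2)) * Y = X := by
  have : NeZero (X ^ 2 + k * Y ^ 2) := ⟨by positivity⟩
  rw [reprRoot, ZMod.natCast_zmod_val, mul_assoc, mul_comm _⁻¹,
    ZMod.coe_mul_inv_eq_one _ (hXY.coprime_sq_add_mul_sq k), mul_one]

theorem dvd_reprRoot_sq_add {k X Y : ℕ} (hXY : X.Coprime Y) (hX : 0 < X) :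
    X ^ 2 + k * Y ^ 2 ∣ reprRoot k X Y ^ 2 + k := by
  have : NeZero (X ^ 2 + k * Y ^ 2) := ⟨by positivity⟩
  rw [← ZMod.natCast_eq_zero_iff]
  have hY := ZMod.coe_mul_inv_eq_one _ (hXY.coprime_sq_add_mul_sq k)
  have hm : ((X ^ 2 + k * Y ^ 2 : ℕ) : ZMod (X ^ 2 + k * Y ^ 2)) = 0 := ZMod.natCast_self _
  push_cast at hm ⊢
  rw [reprRoot, ZMod.natCast_zmod_val]
  set y : ZMod (X ^ 2 + k * Y ^ 2) := (Y : ZMod (X ^ 2 + k * Y ^ 2))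
  linear_combination y⁻¹ ^ 2 * hm - (k : ZMod (X ^ 2 + k * Y ^ 2)) * (y * y⁻¹ + 1) * hY

theorem eq_of_lowerHalfPart_reprRoot_eq {k X Y X' Y' : ℕ} (hk : Squarefree k)
    (hXY : X.Coprime Y) (hXY' : X'.Coprime Y') (hX : 0 < X) (hY : 0 < Y) (hX' : 0 < X')
    (hY' : 0 < Y') (hm : X' ^ 2 + k * Y' ^ 2 = X ^ 2 + k * Y ^ 2)
    (hpart : lowerHalfPart (X ^ 2 + k * Y ^ 2) (reprRoot k X Y) =
      lowerHalfPart (X' ^ 2 + k * Y' ^ 2) (reprRoot k X' Y'))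
    (hlabel : twoAdicLabel (X ^ 2 + k * Y ^ 2) (reprRoot k X Y) =
      twoAdicLabel (X' ^ 2 + k * Y' ^ 2) (reprRoot k X' Y')) :
    X = X' ∧ Y = Y' := by
  have hmul' := natCast_reprRoot_mul (k := k) hXY' hX'
  have hdvd' := dvd_reprRoot_sq_add (k := k) hXY' hX'
  generalize reprRoot k X' Y' = r' at *
  rw [hm] at hmul' hdvd' hpart hlabel
  have hr := natCast_eq_of_lowerHalfPart_eq hk (by positivity) (dvd_reprRoot_sq_add hXY hX) hdvd'
    hpart hlabel
  exact eq_of_sq_add_mul_sq_eq_of_mul_eq hk.ne_zero hXY hXY' hX hY hX' hY' rfl hm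
    (natCast_reprRoot_mul hXY hX) (hr ▸ hmul')

def code (k : ℕ) (p : ℕ × ℕ) : ℕ × Bool :=
  let g := p.1.gcd p.2
  let m := (p.1 / g) ^ 2 + k * (p.2 / g) ^ 2
  let r := reprRoot k (p.1 / g) (p.2 / g)
  (g * lowerHalfPart m r, twoAdicLabel m r)

theorem code_mul {k g X Y : ℕ} (hg : 0 < g) (hXY : X.Coprime Y) :
    code k (X * g, Y * g) = (g * lowerHalfPart (X ^ 2 + k * Y ^ 2) (reprRoot k X Y),
      twoAdicLabel (X ^ 2 + k * Y ^ 2) (reprRoot k X Y)) := by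
  simp [code, Nat.gcd_mul_right, hXY.gcd_eq_one, hg.ne']

theorem code_fst_mem_divisors {k n x y : ℕ} (hx : 0 < x)
    (hn : n = x ^ 2 + k * y ^ 2) : (code k (x, y)).1 ∈ n.divisors := by
  obtain ⟨g, X, Y, hg, hXY, rfl, rfl⟩ := Nat.exists_coprime' (Nat.gcd_pos_of_pos_left y hx)
  have hX := pos_of_mul_pos_left hx hg.le
  rw [code_mul hg hXY, Nat.mem_divisors, hn]
  refine ⟨?_, by positivity⟩
  calc g * lowerHalfPart (X ^ 2 + k * Y ^ 2) (reprRoot k X Y)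
      ∣ g * (g * (X ^ 2 + k * Y ^ 2)) :=
        mul_dvd_mul_left g ((lowerHalfPart_dvd (by positivity) _).trans (dvd_mul_left _ _))
    _ = (X * g) ^ 2 + k * (Y * g) ^ 2 := by ring

theorem code_injOn {k : ℕ} (hk : Squarefree k) (n : ℕ) :
    Set.InjOn (code k) {p : ℕ × ℕ | 0 < p.1 ∧ 0 < p.2 ∧ n = p.1 ^ 2 + k * p.2 ^ 2} := by
  rintro ⟨x, y⟩ ⟨hx, hy, hn⟩ ⟨x', y'⟩ ⟨hx', hy', hn'⟩ hcode
  obtain ⟨g, X, Y, hg, hXY, rfl, rfl⟩ := Nat.exists_coprime' (Nat.gcd_pos_of_pos_left y hx)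
  obtain ⟨g', X', Y', hg', hXY', rfl, rfl⟩ :=
    Nat.exists_coprime' (Nat.gcd_pos_of_pos_left y' hx')
  rw [code_mul hg hXY, code_mul hg' hXY', Prod.mk.injEq] at hcode
  obtain ⟨hpart, hlabel⟩ := hcode
  dsimp only at hx hy hn hx' hy' hn'
  have hX := pos_of_mul_pos_left hx hg.le
  have hX' := pos_of_mul_pos_left hx' hg'.le
  have hgm : g ^ 2 * (X ^ 2 + k * Y ^ 2) = g' ^ 2 * (X' ^ 2 + k * Y' ^ 2) := by
    linear_combination hn.symm.trans hn'
  obtain rfl : g = g' := Nat.eq_of_mul_eq_of_sq_mul_eq hg.ne' hg'.ne' (lowerHalfPart_ne_zero _ _)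
    (lowerHalfPart_ne_zero _ _) (by positivity) (by positivity)
    (factorization_lowerHalfPart_eq_zero_or _ _) (factorization_lowerHalfPart_eq_zero_or _ _)
    hpart hgm
  obtain ⟨rfl, rfl⟩ := eq_of_lowerHalfPart_reprRoot_eq hk hXY hXY' hX
    (pos_of_mul_pos_left hy hg.le) hX' (pos_of_mul_pos_left hy' hg.le)
    (Nat.eq_of_mul_eq_mul_left (by positivity) hgm).symm (Nat.eq_of_mul_eq_mul_left hg hpart)
    hlabel
  rfl

end SqAddMulSq

theorem rep_count_le_general (k n : ℕ) (hk : Squarefree k) :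
    {p : ℕ × ℕ | 0 < p.1 ∧ 0 < p.2 ∧ n = p.1 ^ 2 + k * p.2 ^ 2}.ncard
      ≤ 6 * n.divisors.card := by
  calc _ ≤ ((n.divisors ×ˢ Finset.univ : Finset (ℕ × Bool)) : Set (ℕ × Bool)).ncard :=
        Set.ncard_le_ncard_of_injOn (SqAddMulSq.code k)
          (fun p hp ↦ Finset.mem_product.2
            ⟨SqAddMulSq.code_fst_mem_divisors hp.1 hp.2.2, Finset.mem_univ _⟩)
          (SqAddMulSq.code_injOn hk n)
    _ = 2 * n.divisors.card := by simp [Set.ncard_coe_finset, mul_comm]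
    _ ≤ 6 * n.divisors.card := by omega

theorem rep_count_le (k n : ℕ) (hk : Squarefree k) (hn : 0 < n) :
    {p : ℕ × ℕ | 0 < p.1 ∧ 0 < p.2 ∧ n = p.1 ^ 2 + k * p.2 ^ 2}.ncard
      ≤ 6 * n.divisors.card :=
  rep_count_le_general k n hk
end

section
/- For every 0 < δ < 1/2, the quantity 1/(N·δ) with N = ⌊1/(2^δ - 1)⌋ satisfies 1/(N·δ) < 1/(1 - δ). -/
theorem floor_delta_bound (δ : ℝ) (hδ0 : 0 < δ) (hδ : δ < 1 / 2) :
    1 / ((⌊1 / ((2 : ℝ) ^ δ - 1)⌋₊ : ℝ) * δ) < 1 / (1 - δ) := by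
  have hδ1 : δ < 1 := by linarith
  have hlog : (0:ℝ) < Real.log 2 := Real.log_pos (by norm_num)
  -- 2^δ < 1 + δ by strict convexity of exp
  have h2 : (2 : ℝ) ^ δ < 1 + δ := by
    have := strictConvexOn_exp.2 (Set.mem_univ (0 : ℝ)) (Set.mem_univ (Real.log 2))
      (ne_of_lt hlog) (by linarith : (0:ℝ) < 1 - δ) hδ0 (by ring)
    simp only [smul_eq_mul, mul_zero, zero_add, Real.exp_zero,
      Real.exp_log (by norm_num : (0:ℝ) < 2)] at this
    calc (2:ℝ) ^ δ = Real.exp (δ * Real.log 2) := by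
          rw [Real.rpow_def_of_pos (by norm_num : (0:ℝ) < 2)]; ring_nf
      _ < (1 - δ) * 1 + δ * 2 := this
      _ = 1 + δ := by ring
  have hpos : 0 < (2 : ℝ) ^ δ - 1 := by
    have : (1:ℝ) < (2:ℝ) ^ δ :=
      (Real.one_lt_rpow_iff_of_pos (by norm_num)).2 (Or.inl ⟨by norm_num, hδ0⟩)
    linarith
  set x := 1 / ((2:ℝ) ^ δ - 1) with hx
  have hxge : 1 / δ < x := by
    apply one_div_lt_one_div_of_lt hpos
    linarith
  have hfloor : x - 1 < (⌊x⌋₊ : ℝ) := Nat.sub_one_lt_floor x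
  have hN : 1 / δ - 1 < (⌊x⌋₊ : ℝ) := by linarith
  have hNd : 1 - δ < (⌊x⌋₊ : ℝ) * δ := by
    have := mul_lt_mul_of_pos_right hN hδ0
    rw [sub_mul, one_div_mul_cancel (ne_of_gt hδ0)] at this
    linarith
  have h1δ : 0 < 1 - δ := by linarith
  exact one_div_lt_one_div_of_lt h1δ hNd
end
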